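/- Cross-term estimate: for x ≠ y ∈ ℝ^d and f, g ∈ C¹(ℝ^d, ℂ), Σ_j Im(conj(f(x))∂_j f(x)) Im(conj(g(y))∂_j g(y)) − Σ_{j,k} ((x−y)_j(x−y)_k/|x−y|²) Im(conj(f(x))∂_j f(x)) Im(conj(g(y))∂_k g(y)) ≤ (1/2)|∇̸_y f(x)|²|g(y)|² + (1/2)|∇̸_x g(y)|²|f(x)|², where ∇̸_y denotes the angular gradient with center y. -/
import Mathlib


open ComplexConjugate

private lemma ofReal_mul_im' (t : ℝ) (z : ℂ) : ((t : ℂ) * z).im = t * z.im := by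
  simp [Complex.mul_im]

/-- `j`-th partial derivative of `f` at `x`. -/
noncomputable def pd {d : ℕ} (f : EuclideanSpace ℝ (Fin d) → ℂ)
    (x : EuclideanSpace ℝ (Fin d)) (j : Fin d) : ℂ :=
  fderiv ℝ f x (EuclideanSpace.single j 1)

/-- Radial derivative of `f` at `x` with center `y`. -/
noncomputable def radialDeriv {d : ℕ} (f : EuclideanSpace ℝ (Fin d) → ℂ)
    (x y : EuclideanSpace ℝ (Fin d)) : ℂ :=
  ∑ k : Fin d, (((x k - y k) / ‖x - y‖ : ℝ) : ℂ) * pd f x k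

/-- Squared norm of the angular gradient of `f` at `x` with center `y`. -/
noncomputable def angGradSq {d : ℕ} (f : EuclideanSpace ℝ (Fin d) → ℂ)
    (x y : EuclideanSpace ℝ (Fin d)) : ℝ :=
  ∑ j : Fin d, ‖pd f x j - (((x j - y j) / ‖x - y‖ : ℝ) : ℂ) * radialDeriv f x y‖ ^ 2

/-- Cross-term estimate: for `x ≠ y` and `f, g ∈ C¹`,
`∑ⱼ Im(conj f ∂ⱼf)(x) Im(conj g ∂ⱼg)(y) - ∑_{j,k} ((x-y)ⱼ(x-y)ₖ/|x-y|²) Im(conj f ∂ⱼf)(x) Im(conj g ∂ₖg)(y)`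
is at most `(1/2)|∇̸_y f(x)|²|g(y)|² + (1/2)|∇̸_x g(y)|²|f(x)|²`. -/
theorem stmt15 (d : ℕ) (hd : 1 ≤ d)
    (f g : EuclideanSpace ℝ (Fin d) → ℂ)
    (hf : Differentiable ℝ f) (hg : Differentiable ℝ g)
    (x y : EuclideanSpace ℝ (Fin d)) (hxy : x ≠ y) :
    (∑ j : Fin d, (conj (f x) * pd f x j).im * (conj (g y) * pd g y j).im)
      - ∑ j : Fin d, ∑ k : Fin d,
          ((x j - y j) * (x k - y k) / ‖x - y‖ ^ 2)
            * (conj (f x) * pd f x j).im * (conj (g y) * pd g y k).im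
    ≤ (1 / 2) * angGradSq f x y * ‖g y‖ ^ 2
      + (1 / 2) * angGradSq g y x * ‖f x‖ ^ 2 := by

  have hr : (0:ℝ) < ‖x - y‖ := by
    rw [norm_pos_iff, sub_ne_zero]; exact hxy
  set r : ℝ := ‖x - y‖ with hr_def
  set u : Fin d → ℝ := fun j => (x j - y j) / r with hu_def
  set a : Fin d → ℝ := fun j => (conj (f x) * pd f x j).im with ha_def
  set b : Fin d → ℝ := fun j => (conj (g y) * pd g y j).im with hb_def
  have hsq : ∑ j : Fin d, (x j - y j) ^ 2 = r ^ 2 := by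
    rw [hr_def, EuclideanSpace.norm_eq, Real.sq_sqrt (by positivity)]
    simp [PiLp.sub_apply, sq_abs]
  have hu2 : ∑ j : Fin d, u j ^ 2 = 1 := by
    simp only [hu_def, div_pow, ← Finset.sum_div, hsq]
    field_simp
  set Sa : ℝ := ∑ j : Fin d, u j * a j with hSa_def
  set Sb : ℝ := ∑ j : Fin d, u j * b j with hSb_def
  set c : Fin d → ℂ := fun j => pd f x j - (u j : ℂ) * radialDeriv f x y with hc_def
  set e : Fin d → ℂ := fun j =>
    pd g y j - (((y j - x j) / ‖y - x‖ : ℝ) : ℂ) * radialDeriv g y x with he_def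
  have hryx : ‖y - x‖ = r := by rw [hr_def, norm_sub_rev]
  -- radial derivative facts
  have hSa' : Sa = (conj (f x) * radialDeriv f x y).im := by
    rw [radialDeriv, Finset.mul_sum, Complex.im_sum]
    refine Finset.sum_congr rfl fun j _ => ?_
    have : conj (f x) * ((((x j - y j) / ‖x - y‖ : ℝ) : ℂ) * pd f x j)
        = (((x j - y j) / ‖x - y‖ : ℝ) : ℂ) * (conj (f x) * pd f x j) := by ring
    rw [this, ofReal_mul_im']
  have hSb' : -Sb = (conj (g y) * radialDeriv g y x).im := by
    rw [radialDeriv, Finset.mul_sum, Complex.im_sum, hSb_def, ← Finset.sum_neg_distrib]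
    refine Finset.sum_congr rfl fun j _ => ?_
    have : conj (g y) * ((((y j - x j) / ‖y - x‖ : ℝ) : ℂ) * pd g y j)
        = (((y j - x j) / ‖y - x‖ : ℝ) : ℂ) * (conj (g y) * pd g y j) := by ring
    rw [this, ofReal_mul_im', hryx]
    have : (y j - x j) / r = -(u j) := by rw [hu_def]; ring
    rw [this]; ring
  -- perpendicular components
  have haperp : ∀ j, a j - u j * Sa = (conj (f x) * c j).im := by
    intro j
    rw [hc_def]
    have : conj (f x) * (pd f x j - (u j : ℂ) * radialDeriv f x y)
        = conj (f x) * pd f x j - (u j : ℂ) * (conj (f x) * radialDeriv f x y) := by ring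
    rw [this, Complex.sub_im, ofReal_mul_im', ← hSa']
  have hbperp : ∀ j, b j - u j * Sb = (conj (g y) * e j).im := by
    intro j
    rw [he_def]
    have : conj (g y) * (pd g y j - (((y j - x j) / ‖y - x‖ : ℝ) : ℂ) * radialDeriv g y x)
        = conj (g y) * pd g y j
          - (((y j - x j) / ‖y - x‖ : ℝ) : ℂ) * (conj (g y) * radialDeriv g y x) := by ring
    rw [this, Complex.sub_im, ofReal_mul_im', ← hSb', hryx]
    have h1 : (y j - x j) / r = -(u j) := by rw [hu_def]; ring
    rw [h1]
    have : (conj (g y) * pd g y j).im = b j := rfl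
    rw [this]; ring
  -- rewrite double sum
  have hdouble : ∑ j : Fin d, ∑ k : Fin d,
      ((x j - y j) * (x k - y k) / ‖x - y‖ ^ 2) * a j * b k = Sa * Sb := by
    rw [hSa_def, hSb_def, Finset.sum_mul_sum]
    refine Finset.sum_congr rfl fun j _ => Finset.sum_congr rfl fun k _ => ?_
    rw [hu_def, ← hr_def]
    have hne : r ≠ 0 := ne_of_gt hr
    field_simp
    try ring
  -- expand the perpendicular inner product
  have hexpand : ∑ j : Fin d, (a j - u j * Sa) * (b j - u j * Sb)
      = (∑ j : Fin d, a j * b j) - Sa * Sb := by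
    have h : ∀ j : Fin d, (a j - u j * Sa) * (b j - u j * Sb)
        = a j * b j - Sb * (u j * a j) - Sa * (u j * b j) + Sa * Sb * u j ^ 2 := by
      intro j; ring
    simp_rw [h]
    rw [Finset.sum_add_distrib, Finset.sum_sub_distrib, Finset.sum_sub_distrib,
      ← Finset.mul_sum, ← Finset.mul_sum, ← Finset.mul_sum, ← hSa_def, ← hSb_def, hu2]
    ring
  -- termwise bound
  have hbound : ∀ j : Fin d, (a j - u j * Sa) * (b j - u j * Sb)
      ≤ 1 / 2 * ‖c j‖ ^ 2 * ‖g y‖ ^ 2 + 1 / 2 * ‖e j‖ ^ 2 * ‖f x‖ ^ 2 := by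
    intro j
    have h1 : |a j - u j * Sa| ≤ ‖f x‖ * ‖c j‖ := by
      rw [haperp j]
      calc |(conj (f x) * c j).im| ≤ ‖conj (f x) * c j‖ := Complex.abs_im_le_norm _
        _ = ‖f x‖ * ‖c j‖ := by rw [norm_mul, RCLike.norm_conj]
    have h2 : |b j - u j * Sb| ≤ ‖g y‖ * ‖e j‖ := by
      rw [hbperp j]
      calc |(conj (g y) * e j).im| ≤ ‖conj (g y) * e j‖ := Complex.abs_im_le_norm _
        _ = ‖g y‖ * ‖e j‖ := by rw [norm_mul, RCLike.norm_conj]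
    have h3 : (a j - u j * Sa) * (b j - u j * Sb) ≤ |a j - u j * Sa| * |b j - u j * Sb| := by
      rw [← abs_mul]; exact le_abs_self _
    nlinarith [abs_nonneg (a j - u j * Sa), abs_nonneg (b j - u j * Sb),
      norm_nonneg (f x), norm_nonneg (g y), norm_nonneg (c j), norm_nonneg (e j),
      mul_le_mul h1 h2 (abs_nonneg _) (mul_nonneg (norm_nonneg _) (norm_nonneg _)),
      sq_nonneg (‖c j‖ * ‖g y‖ - ‖e j‖ * ‖f x‖)]
  -- identify angGradSq
  have hang1 : angGradSq f x y = ∑ j : Fin d, ‖c j‖ ^ 2 := by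
    rw [angGradSq]
  have hang2 : angGradSq g y x = ∑ j : Fin d, ‖e j‖ ^ 2 := by
    rw [angGradSq]
  calc (∑ j : Fin d, a j * b j)
      - ∑ j : Fin d, ∑ k : Fin d,
          ((x j - y j) * (x k - y k) / ‖x - y‖ ^ 2) * a j * b k
      = ∑ j : Fin d, (a j - u j * Sa) * (b j - u j * Sb) := by rw [hdouble, hexpand]
    _ ≤ ∑ j : Fin d, (1 / 2 * ‖c j‖ ^ 2 * ‖g y‖ ^ 2 + 1 / 2 * ‖e j‖ ^ 2 * ‖f x‖ ^ 2) :=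
        Finset.sum_le_sum fun j _ => hbound j
    _ = (1 / 2) * angGradSq f x y * ‖g y‖ ^ 2 + (1 / 2) * angGradSq g y x * ‖f x‖ ^ 2 := by
        rw [Finset.sum_add_distrib, hang1, hang2, Finset.mul_sum, Finset.mul_sum,
          Finset.sum_mul, Finset.sum_mul]
        try (congr 1 <;> exact Finset.sum_congr rfl fun j _ => by ring)
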